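/- The function f(α) = (1/2)[−cos α + sin α − cos 2α] on [π/2, π] attains its maximum at α* = 2 arctan[(−3 + √17 + √(2(5−√17)))/2], i.e., f'(α*) = 0 and f''(α*) < 0. -/

import Mathlib

/-!
Substituting `α = 2 arctan v` turns `2 f'(α)` into `-(v⁴ + 6v³ - 10v - 1) / (1 + v²)²`.
Over `ℚ(√17)` the quartic splits as
`(v² + (3 - √17) v + 4 - √17) (v² + (3 + √17) v + 4 + √17)`, and `tStar` is the positive
root of the first factor, while the second factor is positive for `v > 0`. Hence on `(0, π)`
the derivative `f'` is positive before `α* = 2 arctan tStar` and negative after it.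
At `α*` the quartic vanishes, which reduces the numerator of `f''(α*)` to
`-4 (5t³ + 6t² - 7t - 2)`, negative since `t = tStar > 1`.
-/

open Real Set

lemma isMaxOn_of_deriv_nonneg_of_deriv_nonpos {f : ℝ → ℝ} {a b c : ℝ} (hac : a ≤ c) (hcb : c ≤ b)
    (hf : ContinuousOn f (Icc a b)) (hf' : DifferentiableOn ℝ f (Ioo a b))
    (hinc : ∀ x ∈ Ioo a c, 0 ≤ deriv f x) (hdec : ∀ x ∈ Ioo c b, deriv f x ≤ 0) :
    IsMaxOn f (Icc a b) c := by
  have hmono : MonotoneOn f (Icc a c) :=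
    monotoneOn_of_deriv_nonneg (convex_Icc a c) (hf.mono (Icc_subset_Icc_right hcb))
      (by rw [interior_Icc]; exact hf'.mono (Ioo_subset_Ioo_right hcb)) (by rwa [interior_Icc])
  have hanti : AntitoneOn f (Icc c b) :=
    antitoneOn_of_deriv_nonpos (convex_Icc c b) (hf.mono (Icc_subset_Icc_left hac))
      (by rw [interior_Icc]; exact hf'.mono (Ioo_subset_Ioo_left hac)) (by rwa [interior_Icc])
  refine isMaxOn_iff.2 fun x ⟨hax, hxb⟩ => ?_
  rcases le_total x c with hxc | hcx
  · exact hmono ⟨hax, hxc⟩ ⟨hac, le_rfl⟩ hxc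
  · exact hanti ⟨le_rfl, hcb⟩ ⟨hcx, hxb⟩ hcx

lemma sin_two_mul_arctan (v : ℝ) : sin (2 * arctan v) = 2 * v / (1 + v ^ 2) := by
  have h : √(1 + v ^ 2) ^ 2 = 1 + v ^ 2 := sq_sqrt (by positivity)
  rw [sin_two_mul, sin_arctan, cos_arctan, mul_assoc, div_mul_div_comm, mul_one, ← sq, h]
  ring

lemma cos_two_mul_arctan (v : ℝ) : cos (2 * arctan v) = (1 - v ^ 2) / (1 + v ^ 2) := by
  have h : 1 + v ^ 2 ≠ 0 := by positivity
  rw [cos_two_mul, cos_sq_arctan]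
  field_simp
  ring

lemma exists_pos_eq_two_mul_arctan {x : ℝ} (h0 : 0 < x) (hπ : x < π) :
    ∃ v, 0 < v ∧ 2 * arctan v = x :=
  ⟨tan (x / 2), tan_pos_of_pos_of_lt_pi_div_two (by linarith) (by linarith), by
    rw [arctan_tan (by linarith) (by linarith)]; ring⟩

noncomputable def maxAngleDensity (α : ℝ) : ℝ := (1/2) * (-cos α + sin α - cos (2*α))

lemma hasDerivAt_maxAngleDensity (α : ℝ) :
    HasDerivAt maxAngleDensity ((sin α + cos α + 2 * sin (2 * α)) / 2) α := by
  have hcos2 : HasDerivAt (fun x => cos (2 * x)) (-sin (2 * α) * 2) α :=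
    (hasDerivAt_cos (2 * α)).comp α ((hasDerivAt_id α).const_mul 2 |>.congr_deriv (mul_one 2))
  unfold maxAngleDensity
  exact ((((hasDerivAt_cos α).neg.add (hasDerivAt_sin α)).sub hcos2).const_mul (1/2 : ℝ)).congr_deriv
    (by ring)

lemma deriv_maxAngleDensity :
    deriv maxAngleDensity = fun α => (sin α + cos α + 2 * sin (2 * α)) / 2 :=
  funext fun α => (hasDerivAt_maxAngleDensity α).deriv

lemma deriv_deriv_maxAngleDensity (α : ℝ) :
    deriv (deriv maxAngleDensity) α = (cos α - sin α + 4 * cos (2 * α)) / 2 := by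
  have hsin2 : HasDerivAt (fun x => sin (2 * x)) (cos (2 * α) * 2) α :=
    (hasDerivAt_sin (2 * α)).comp α ((hasDerivAt_id α).const_mul 2 |>.congr_deriv (mul_one 2))
  rw [deriv_maxAngleDensity]
  exact ((((hasDerivAt_sin α).add (hasDerivAt_cos α)).add (hsin2.const_mul 2)).div_const 2
    |>.congr_deriv (by ring)).deriv

lemma deriv_maxAngleDensity_two_mul_arctan (v : ℝ) :
    deriv maxAngleDensity (2 * arctan v) = -(v^4 + 6*v^3 - 10*v - 1) / (2 * (1 + v^2)^2) := by
  have h : 1 + v ^ 2 ≠ 0 := by positivity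
  rw [(hasDerivAt_maxAngleDensity _).deriv, sin_two_mul (2 * arctan v), sin_two_mul_arctan, cos_two_mul_arctan]
  field_simp
  ring

lemma deriv_deriv_maxAngleDensity_two_mul_arctan (v : ℝ) :
    deriv (deriv maxAngleDensity) (2 * arctan v) =
      (3*v^4 - 2*v^3 - 24*v^2 - 2*v + 5) / (2 * (1 + v^2)^2) := by
  have h : 1 + v ^ 2 ≠ 0 := by positivity
  rw [deriv_deriv_maxAngleDensity, cos_two_mul (2 * arctan v), sin_two_mul_arctan,
    cos_two_mul_arctan]
  field_simp
  ring

noncomputable def tStar : ℝ := (-3 + √17 + √(2 * (5 - √17))) / 2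

lemma sq_sqrt_seventeen : √17 ^ 2 = 17 := sq_sqrt (by norm_num)

lemma four_lt_sqrt_seventeen : 4 < √17 := by
  rw [lt_sqrt (by norm_num)]; norm_num

lemma sqrt_seventeen_lt : √17 < 9 / 2 := by
  rw [sqrt_lt' (by norm_num)]; norm_num

lemma tStar_sq_add_mul_add : tStar ^ 2 + (3 - √17) * tStar + (4 - √17) = 0 := by
  have hu : √(2 * (5 - √17)) ^ 2 = 2 * (5 - √17) :=
    sq_sqrt (by linarith [sqrt_seventeen_lt])
  unfold tStar
  linear_combination hu / 4 - sq_sqrt_seventeen / 4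

lemma one_lt_tStar : 1 < tStar := by
  have hu : 1 < √(2 * (5 - √17)) := by
    rw [lt_sqrt (by norm_num)]; linarith [sqrt_seventeen_lt]
  unfold tStar
  linarith [four_lt_sqrt_seventeen]

lemma quartic_eq_mul (v : ℝ) :
    v^4 + 6*v^3 - 10*v - 1 =
      (v - tStar) * ((v + tStar + 3 - √17) * (v^2 + (3 + √17) * v + 4 + √17)) := by
  linear_combination (v + 1) ^ 2 * sq_sqrt_seventeen +
    (v^2 + (3 + √17) * v + 4 + √17) * tStar_sq_add_mul_add

lemma quartic_cofactor_pos {v : ℝ} (hv : 0 < v) :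
    0 < (v + tStar + 3 - √17) * (v^2 + (3 + √17) * v + 4 + √17) := by
  have ht : 0 < tStar := by linarith [one_lt_tStar]
  -- Vieta: `tStar (tStar + 3 - √17) = √17 - 4`
  have hprod : 0 < tStar * (tStar + 3 - √17) := by
    nlinarith [four_lt_sqrt_seventeen, tStar_sq_add_mul_add]
  have hcof : 0 < tStar + 3 - √17 := (pos_iff_pos_of_mul_pos hprod).1 ht
  have hs : 0 < √17 := by positivity
  exact mul_pos (by linarith) (by nlinarith)

lemma quartic_tStar : tStar^4 + 6*tStar^3 - 10*tStar - 1 = 0 := by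
  rw [quartic_eq_mul, sub_self, zero_mul]

lemma two_mul_arctan_tStar_mem : 2 * arctan tStar ∈ Ioo 0 π := by
  have h0 : 0 < arctan tStar := arctan_pos.2 (by linarith [one_lt_tStar])
  constructor <;> linarith [arctan_lt_pi_div_two tStar]

lemma deriv_maxAngleDensity_pos {α : ℝ} (h0 : 0 < α) (hα : α < 2 * arctan tStar) :
    0 < deriv maxAngleDensity α := by
  obtain ⟨v, hv, rfl⟩ := exists_pos_eq_two_mul_arctan h0 (hα.trans two_mul_arctan_tStar_mem.2)
  have hvt : v < tStar := arctan_strictMono.lt_iff_lt.1 (by linarith)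
  rw [deriv_maxAngleDensity_two_mul_arctan, quartic_eq_mul]
  exact div_pos (by nlinarith [quartic_cofactor_pos hv]) (by positivity)

lemma deriv_maxAngleDensity_neg {α : ℝ} (hα : 2 * arctan tStar < α) (hπ : α < π) :
    deriv maxAngleDensity α < 0 := by
  obtain ⟨v, hv, rfl⟩ := exists_pos_eq_two_mul_arctan (two_mul_arctan_tStar_mem.1.trans hα) hπ
  have hvt : tStar < v := arctan_strictMono.lt_iff_lt.1 (by linarith)
  rw [deriv_maxAngleDensity_two_mul_arctan, quartic_eq_mul]
  exact div_neg_of_neg_of_pos (by nlinarith [quartic_cofactor_pos hv]) (by positivity)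

lemma isMaxOn_maxAngleDensity : IsMaxOn maxAngleDensity (Icc 0 π) (2 * arctan tStar) :=
  isMaxOn_of_deriv_nonneg_of_deriv_nonpos two_mul_arctan_tStar_mem.1.le
    two_mul_arctan_tStar_mem.2.le
    (fun x _ => (hasDerivAt_maxAngleDensity x).continuousAt.continuousWithinAt)
    (fun x _ => (hasDerivAt_maxAngleDensity x).differentiableAt.differentiableWithinAt)
    (fun _ hx => (deriv_maxAngleDensity_pos hx.1 hx.2).le)
    (fun _ hx => (deriv_maxAngleDensity_neg hx.1 hx.2).le)

lemma deriv_maxAngleDensity_tStar : deriv maxAngleDensity (2 * arctan tStar) = 0 := by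
  rw [deriv_maxAngleDensity_two_mul_arctan, quartic_tStar, neg_zero, zero_div]

lemma deriv_deriv_maxAngleDensity_tStar_neg :
    deriv (deriv maxAngleDensity) (2 * arctan tStar) < 0 := by
  have ht := one_lt_tStar
  rw [deriv_deriv_maxAngleDensity_two_mul_arctan]
  refine div_neg_of_neg_of_pos ?_ (by positivity)
  -- the numerator equals `3 Q(t) - 4 ((t - 1) (5t² + 11t + 4) + 2)` with `Q(t) = 0`
  nlinarith [quartic_tStar, mul_pos (sub_pos.2 ht) (by positivity : (0 : ℝ) < 5*tStar^2 + 11*tStar + 4)]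

theorem stmt_15 (f : ℝ → ℝ)
    (hf : ∀ α : ℝ, f α = (1/2) * (-Real.cos α + Real.sin α - Real.cos (2*α))) :
    let αstar := 2 * Real.arctan ((-3 + Real.sqrt 17 + Real.sqrt (2*(5 - Real.sqrt 17))) / 2)
    (∀ α ∈ Set.Icc (π/2) π, f α ≤ f αstar) ∧
      deriv f αstar = 0 ∧ deriv (deriv f) αstar < 0 := by
  obtain rfl : f = maxAngleDensity := funext hf
  exact ⟨fun α hα => isMaxOn_maxAngleDensity (Icc_subset_Icc (by positivity) le_rfl hα),
    deriv_maxAngleDensity_tStar, deriv_deriv_maxAngleDensity_tStar_neg⟩
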